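/- Let A and B be commuting bounded linear operators on a complex Hilbert space H with N(A) ⊆ N(A*), N(B) ⊆ N(B*), and both R(A) and R(B) closed. Since N(A) is invariant under B, let Z = B restricted to N(A), a bounded operator on the Hilbert space N(A). If N(Z*) ⊆ N(Z), then R(AB) is closed. -/

import Mathlib

/-!
Since `R(AB) = A(R(B) + N(A))` and, by the open mapping theorem, an operator with closed range
maps closed subspaces containing its kernel onto closed sets, it suffices that `R(B) + N(A)` is
closed. In the Hilbert space `N(A)` we have `N(A) = N(Z*) ⊕ closure R(Z)`, where
`closure R(Z) ⊆ R(B)` because `R(B)` is closed, and `N(Z*) ⊆ N(Z) ⊆ N(B) ⊆ N(B*) = R(B)ᗮ`.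
Hence `R(B) + N(A) = R(B) + (N(A) ∩ R(B)ᗮ)` is the sum of a closed subspace and a closed subspace
orthogonal to it, which is closed.
-/

open ContinuousLinearMap Topology

theorem Submodule.isClosed_sup_of_le_orthogonal {𝕜 E : Type*} [RCLike 𝕜] [NormedAddCommGroup E]
    [InnerProductSpace 𝕜 E] {U V : Submodule 𝕜 E} [U.HasOrthogonalProjection]
    (hV : IsClosed (V : Set E)) (hVU : V ≤ Uᗮ) : IsClosed ((U ⊔ V : Submodule 𝕜 E) : Set E) := by
  suffices h : ((U ⊔ V : Submodule 𝕜 E) : Set E) = (fun x => x - U.starProjection x) ⁻¹' V from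
    h ▸ hV.preimage (continuous_id.sub U.starProjection.continuous)
  ext x
  constructor
  · intro hx
    obtain ⟨u, hu, v, hv, rfl⟩ := Submodule.mem_sup.mp hx
    have hu' : U.starProjection u = u := starProjection_eq_self_iff.mpr hu
    have hv' : U.starProjection v = 0 := (starProjection_apply_eq_zero_iff _).mpr (hVU hv)
    simpa [hu', hv'] using hv
  · intro hx
    exact Submodule.mem_sup.mpr ⟨_, U.starProjection_apply_mem x, _, hx, add_sub_cancel _ _⟩

theorem ContinuousLinearMap.ker_adjoint_sup_topologicalClosure_range {𝕜 E F : Type*} [RCLike 𝕜]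
    [NormedAddCommGroup E] [InnerProductSpace 𝕜 E] [CompleteSpace E]
    [NormedAddCommGroup F] [InnerProductSpace 𝕜 F] [CompleteSpace F] (T : E →L[𝕜] F) :
    (adjoint T).ker ⊔ T.range.topologicalClosure = ⊤ := by
  rw [← Submodule.orthogonal_orthogonal_eq_closure, orthogonal_range]
  exact Submodule.sup_orthogonal_of_hasOrthogonalProjection

theorem ContinuousLinearMap.isClosed_image_of_ker_le {𝕜 E F : Type*} [NontriviallyNormedField 𝕜]
    [NormedAddCommGroup E] [NormedSpace 𝕜 E] [CompleteSpace E]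
    [NormedAddCommGroup F] [NormedSpace 𝕜 F] [CompleteSpace F] (f : E →L[𝕜] F)
    (hf : IsClosed (Set.range f)) {S : Submodule 𝕜 E} (hS : IsClosed (S : Set E))
    (hker : f.ker ≤ S) : IsClosed (f '' S) := by
  have hrange : (f.range : Set F) = Set.range f := LinearMap.coe_range _
  have : CompleteSpace f.range := (hrange ▸ hf).completeSpace_coe
  let g : E →L[𝕜] f.range := f.codRestrict f.range (LinearMap.mem_range_self (f : E →ₗ[𝕜] F))
  have hg : Function.Surjective g := fun ⟨_, x, hx⟩ => ⟨x, Subtype.ext hx⟩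
  have hsat : g ⁻¹' (g '' S) = S := by
    have h := Submodule.comap_map_eq (g : E →ₗ[𝕜] f.range) S
    rw [ker_codRestrict, sup_eq_left.mpr hker] at h
    exact congrArg SetLike.coe h
  have hgS : IsClosed (g '' S) :=
    ((isQuotientMap_iff_isClosed.mp (g.isQuotientMap hg)).2 _).mpr (by rwa [hsat])
  have himage : f '' S = Subtype.val '' (g '' S) := by
    rw [Set.image_image]; rfl
  exact himage ▸ (hrange ▸ hf).isClosedEmbedding_subtypeVal.isClosedMap _ hgS

theorem Submodule.map_sup_ker {R M N : Type*} [Ring R] [AddCommGroup M] [Module R M]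
    [AddCommGroup N] [Module R N] (f : M →ₗ[R] N) (p : Submodule R M) :
    (p ⊔ LinearMap.ker f).map f = p.map f := by
  rw [← comap_map_eq, map_comap_eq, inf_eq_right.mpr (LinearMap.map_le_range)]

section Restriction

variable {𝕜 E : Type*} [RCLike 𝕜] [NormedAddCommGroup E] [InnerProductSpace 𝕜 E] [CompleteSpace E]
  {M : Submodule 𝕜 E} [CompleteSpace M] {B : E →L[𝕜] E} {Z : M →L[𝕜] M}

theorem le_range_sup_inf_orthogonal_range (hZ : ∀ x, (Z x : E) = B x)
    (hBran : IsClosed (Set.range B)) (hZker : (adjoint Z).ker ≤ Z.ker)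
    (hBker : B.ker ≤ (adjoint B).ker) : M ≤ B.range ⊔ M ⊓ B.rangeᗮ := by
  intro m hm
  have hmem : (⟨m, hm⟩ : M) ∈ (adjoint Z).ker ⊔ Z.range.topologicalClosure := by
    rw [ker_adjoint_sup_topologicalClosure_range]; trivial
  obtain ⟨q, hq, r, hr, hqr⟩ := Submodule.mem_sup.mp hmem
  have hrB : (r : E) ∈ B.range := by
    have : (r : E) ∈ closure (Set.range B) :=
      map_mem_closure continuous_subtype_val hr (by rintro _ ⟨x, rfl⟩; exact ⟨x, (hZ x).symm⟩)
    rwa [hBran.closure_eq] at this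
  have hqB : (q : E) ∈ B.rangeᗮ := by
    rw [orthogonal_range]
    apply hBker
    have hZq : Z q = 0 := hZker hq
    rw [LinearMap.mem_ker, coe_coe, ← hZ, hZq, Submodule.coe_zero]
  have hm : m = r + q := by
    rw [add_comm, ← Submodule.coe_add, hqr]
  rw [hm]
  exact Submodule.add_mem_sup hrB ⟨q.2, hqB⟩

theorem isClosed_range_sup_of_restrict_ker_adjoint_le (hZ : ∀ x, (Z x : E) = B x)
    (hBran : IsClosed (Set.range B)) (hZker : (adjoint Z).ker ≤ Z.ker)
    (hBker : B.ker ≤ (adjoint B).ker) : IsClosed ((B.range ⊔ M : Submodule 𝕜 E) : Set E) := by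
  have : CompleteSpace B.range := (LinearMap.coe_range (B : E →ₗ[𝕜] E) ▸ hBran).completeSpace_coe
  have hM : IsClosed (M : Set E) := (completeSpace_coe_iff_isComplete.mp ‹_›).isClosed
  have hsup : B.range ⊔ M = B.range ⊔ M ⊓ B.rangeᗮ :=
    le_antisymm (sup_le le_sup_left (le_range_sup_inf_orthogonal_range hZ hBran hZker hBker))
      (sup_le_sup_left inf_le_left _)
  rw [hsup]
  exact Submodule.isClosed_sup_of_le_orthogonal (hM.inter B.range.isClosed_orthogonal) inf_le_right

end Restriction

theorem stmt11 {H : Type*} [NormedAddCommGroup H] [InnerProductSpace ℂ H] [CompleteSpace H]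
    (A B : H →L[ℂ] H)
    (hB : LinearMap.ker (B : H →ₗ[ℂ] H) ≤ LinearMap.ker (ContinuousLinearMap.adjoint B : H →ₗ[ℂ] H))
    (hAran : IsClosed (Set.range A)) (hBran : IsClosed (Set.range B))
    (Z : LinearMap.ker (A : H →ₗ[ℂ] H) →L[ℂ] LinearMap.ker (A : H →ₗ[ℂ] H))
    (hZ : ∀ x : LinearMap.ker (A : H →ₗ[ℂ] H), (Z x : H) = B x)
    (hcoqp : LinearMap.ker (ContinuousLinearMap.adjoint Z).toLinearMap ≤ LinearMap.ker Z.toLinearMap) :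
    IsClosed (Set.range (A ∘L B)) := by
  have hrange : Set.range (A ∘L B) = A '' (B.range ⊔ A.ker : Submodule ℂ H) := by
    have h := congrArg SetLike.coe (Submodule.map_sup_ker (A : H →ₗ[ℂ] H) B.range)
    simp only [Submodule.map_coe, LinearMap.coe_range, coe_coe] at h
    rw [h, coe_comp, Set.range_comp]
  rw [hrange]
  exact A.isClosed_image_of_ker_le hAran (isClosed_range_sup_of_restrict_ker_adjoint_le hZ hBran hcoqp hB)
    le_sup_right
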